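/- arXiv:1503.06119 — 9 statements merged into one kernel-verified Lean document; each statement's English description precedes it below -/
import Mathlib

section
/- The dual cone of the extended Lorentz cone L = {(x,u) ∈ ℝ^p × ℝ^q : x ≥ ‖u‖e} is L* = {(x,u) ∈ ℝ^p × ℝ^q : eᵀx ≥ ‖u‖ and x ≥ 0}. -/
/-!
Testing membership in the dual against `(eᵢ, 0) ∈ L` forces `x ≥ 0`, and testing against
`(‖u‖e, -u) ∈ L` gives `‖u‖ (eᵀx) ≥ ‖u‖²`. Conversely, for `(y, v) ∈ L` and `x ≥ 0`,
`⟨x, y⟩ ≥ (eᵀx) ‖v‖ ≥ ‖u‖ ‖v‖ ≥ -⟨u, v⟩` by Cauchy–Schwarz.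
-/

open scoped RealInnerProductSpace

/-- The extended Lorentz cone `L = {(x,u) ∈ ℝ^p × ℝ^q : x ≥ ‖u‖e}`. -/
def extendedLorentzCone (p q : ℕ) :
    Set (EuclideanSpace ℝ (Fin p) × EuclideanSpace ℝ (Fin q)) :=
  {z | ∀ i, ‖z.2‖ ≤ z.1 i}

/-- The dual of a set `S ⊆ ℝ^p × ℝ^q`:
`S* = {z : ⟨z, w⟩ ≥ 0 for all w ∈ S}`, with the inner product
`⟨(x,u),(y,v)⟩ = xᵀy + uᵀv`. -/
def dualSet (p q : ℕ)
    (S : Set (EuclideanSpace ℝ (Fin p) × EuclideanSpace ℝ (Fin q))) :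
    Set (EuclideanSpace ℝ (Fin p) × EuclideanSpace ℝ (Fin q)) :=
  {z | ∀ w ∈ S, (0:ℝ) ≤ ⟪z.1, w.1⟫ + ⟪z.2, w.2⟫}

namespace EuclideanSpace

variable {ι : Type*} [Fintype ι]

theorem inner_toLp_const_right (x : EuclideanSpace ℝ ι) (c : ℝ) :
    ⟪x, WithLp.toLp 2 (fun _ => c)⟫ = c * ∑ i, x i := by
  simp only [PiLp.inner_apply, RCLike.inner_apply, conj_trivial, Finset.mul_sum]

theorem mul_sum_le_inner_of_le {x y : EuclideanSpace ℝ ι} {c : ℝ}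
    (hx : ∀ i, 0 ≤ x i) (hy : ∀ i, c ≤ y i) : c * ∑ i, x i ≤ ⟪x, y⟫ := by
  rw [Finset.mul_sum, PiLp.inner_apply]
  gcongr with i
  rw [RCLike.inner_apply, conj_trivial]
  exact mul_le_mul_of_nonneg_right (hy i) (hx i)

end EuclideanSpace

namespace extendedLorentzCone

variable {p q : ℕ}

theorem single_mem (i : Fin p) :
    (EuclideanSpace.single i 1, 0) ∈ extendedLorentzCone p q := by
  intro j
  rw [norm_zero, PiLp.single_apply]
  split_ifs <;> norm_num

theorem toLp_const_norm_mem (u : EuclideanSpace ℝ (Fin q)) :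
    (WithLp.toLp 2 (fun _ => ‖u‖), u) ∈ extendedLorentzCone p q :=
  fun _ => le_rfl

theorem nonneg_of_mem_dualSet {z : EuclideanSpace ℝ (Fin p) × EuclideanSpace ℝ (Fin q)}
    (hz : z ∈ dualSet p q (extendedLorentzCone p q)) (i : Fin p) : 0 ≤ z.1 i := by
  simpa [EuclideanSpace.inner_single_right] using hz _ (single_mem i)

theorem norm_le_sum_of_mem_dualSet
    {z : EuclideanSpace ℝ (Fin p) × EuclideanSpace ℝ (Fin q)}
    (hz : z ∈ dualSet p q (extendedLorentzCone p q)) : ‖z.2‖ ≤ ∑ i, z.1 i := by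
  have key : ‖z.2‖ * ‖z.2‖ ≤ ‖z.2‖ * ∑ i, z.1 i := by
    have := hz _ (toLp_const_norm_mem (-z.2))
    rw [EuclideanSpace.inner_toLp_const_right, norm_neg, inner_neg_right,
      real_inner_self_eq_norm_mul_norm] at this
    linarith
  rcases (norm_nonneg z.2).eq_or_lt with h0 | h0
  · rw [← h0]
    exact Finset.sum_nonneg fun i _ => nonneg_of_mem_dualSet hz i
  · exact le_of_mul_le_mul_left key h0

theorem mem_dualSet {z : EuclideanSpace ℝ (Fin p) × EuclideanSpace ℝ (Fin q)}
    (hnorm : ‖z.2‖ ≤ ∑ i, z.1 i) (hnonneg : ∀ i, 0 ≤ z.1 i) :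
    z ∈ dualSet p q (extendedLorentzCone p q) := by
  intro w hw
  have hinner : -⟪z.2, w.2⟫ ≤ ⟪z.1, w.1⟫ :=
    calc -⟪z.2, w.2⟫ ≤ ‖z.2‖ * ‖w.2‖ := (neg_le_abs _).trans (abs_real_inner_le_norm _ _)
      _ ≤ (∑ i, z.1 i) * ‖w.2‖ := by gcongr
      _ = ‖w.2‖ * ∑ i, z.1 i := mul_comm _ _
      _ ≤ ⟪z.1, w.1⟫ := EuclideanSpace.mul_sum_le_inner_of_le hnonneg hw
  linarith

end extendedLorentzCone

theorem stmt1_general (p q : ℕ) :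
    dualSet p q (extendedLorentzCone p q) =
      {z | ‖z.2‖ ≤ ∑ i, z.1 i ∧ ∀ i, 0 ≤ z.1 i} := by
  ext z
  exact ⟨fun hz => ⟨extendedLorentzCone.norm_le_sum_of_mem_dualSet hz,
      extendedLorentzCone.nonneg_of_mem_dualSet hz⟩,
    fun ⟨hnorm, hnonneg⟩ => extendedLorentzCone.mem_dualSet hnorm hnonneg⟩

/-- The dual cone of the extended Lorentz cone is
`L* = {(x,u) : eᵀx ≥ ‖u‖ and x ≥ 0}`. -/
theorem stmt1 (p q : ℕ) (hp : 0 < p) (hq : 0 < q) :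
    dualSet p q (extendedLorentzCone p q) =
      {z | ‖z.2‖ ≤ ∑ i, z.1 i ∧ ∀ i, 0 ≤ z.1 i} :=
  stmt1_general p q
end

section
/- The extended Lorentz cone L = {(x,u) ∈ ℝ^p × ℝ^q : x ≥ ‖u‖e} is subdual, i.e., L ⊆ L*, and L is self-dual (L = L*) if and only if p = 1. -/
/-!
The dual cone is `L* = {(y, v) : y ≥ 0, ‖v‖ ≤ ∑ᵢ yᵢ}`: sufficiency is Cauchy–Schwarz,
`⟪y, x⟫ ≥ (∑ᵢ yᵢ) ‖u‖ ≥ ‖v‖ ‖u‖ ≥ -⟪v, u⟫`, and necessity comes from testing against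
`(eᵢ, 0)` and `(‖v‖ e, -v)`. A point of `L` meets `‖v‖ ≤ ∑ᵢ yᵢ` already through one coordinate,
so `L ⊆ L*` as soon as `p ≥ 1`. For `p = 1` the two descriptions coincide, while for `p ≥ 2` the point
`(e₁, v)` with `‖v‖ = 1` lies in `L*` but not in `L`, since its coordinate `0` vanishes.
-/

open scoped RealInnerProductSpace

lemma EuclideanSpace.real_inner_eq_sum {ι : Type*} [Fintype ι] (x y : EuclideanSpace ℝ ι) :
    ⟪x, y⟫ = ∑ i, x i * y i := by
  simp [PiLp.inner_apply, mul_comm]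

lemma single_mem_extendedLorentzCone (p q : ℕ) (i : Fin p) :
    (EuclideanSpace.single i 1, 0) ∈ extendedLorentzCone p q := by
  intro j
  by_cases h : j = i <;> simp [h]

lemma const_neg_mem_extendedLorentzCone (p q : ℕ) (v : EuclideanSpace ℝ (Fin q)) :
    (WithLp.toLp 2 fun _ => ‖v‖, -v) ∈ extendedLorentzCone p q := by
  simp [extendedLorentzCone]

theorem mem_dualSet_extendedLorentzCone_iff (p q : ℕ) (y : EuclideanSpace ℝ (Fin p))
    (v : EuclideanSpace ℝ (Fin q)) :
    (y, v) ∈ dualSet p q (extendedLorentzCone p q) ↔ (∀ i, 0 ≤ y i) ∧ ‖v‖ ≤ ∑ i, y i := by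
  constructor
  · intro hyv
    have hy : ∀ i, 0 ≤ y i := fun i => by
      simpa [EuclideanSpace.inner_single_right] using hyv _ (single_mem_extendedLorentzCone p q i)
    refine ⟨hy, ?_⟩
    have hsum : 0 ≤ ∑ i, y i := Finset.sum_nonneg fun i _ => hy i
    have htest : 0 ≤ ‖v‖ * ∑ i, y i - ‖v‖ ^ 2 := by
      have := hyv _ (const_neg_mem_extendedLorentzCone p q v)
      simp only [EuclideanSpace.real_inner_eq_sum, inner_neg_right,
        real_inner_self_eq_norm_sq] at this
      rw [Finset.mul_sum]
      simpa [mul_comm] using this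
    nlinarith [norm_nonneg v]
  · rintro ⟨hy, hv⟩ ⟨x, u⟩ hxu
    have hyx : (∑ i, y i) * ‖u‖ ≤ ⟪y, x⟫ := by
      rw [EuclideanSpace.real_inner_eq_sum, Finset.sum_mul]
      exact Finset.sum_le_sum fun i _ => mul_le_mul_of_nonneg_left (hxu i) (hy i)
    have hvu : -(‖v‖ * ‖u‖) ≤ ⟪v, u⟫ := neg_le_of_abs_le (abs_real_inner_le_norm v u)
    nlinarith [norm_nonneg u]

theorem extendedLorentzCone_subset_dualSet (p q : ℕ) (hp : 0 < p) :
    extendedLorentzCone p q ⊆ dualSet p q (extendedLorentzCone p q) := by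
  rintro ⟨y, v⟩ hyv
  have hy : ∀ i, 0 ≤ y i := fun i => (norm_nonneg v).trans (hyv i)
  refine (mem_dualSet_extendedLorentzCone_iff p q y v).2 ⟨hy, ?_⟩
  exact (hyv ⟨0, hp⟩).trans (Finset.single_le_sum (fun i _ => hy i) (Finset.mem_univ _))

theorem dualSet_extendedLorentzCone_subset_of_eq_one (q : ℕ) :
    dualSet 1 q (extendedLorentzCone 1 q) ⊆ extendedLorentzCone 1 q := by
  rintro ⟨y, v⟩ hyv i
  obtain ⟨-, hv⟩ := (mem_dualSet_extendedLorentzCone_iff 1 q y v).1 hyv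
  simpa [Subsingleton.elim i 0] using hv

theorem dualSet_extendedLorentzCone_not_subset (p q : ℕ) (hp : 2 ≤ p) (hq : 0 < q) :
    ¬ dualSet p q (extendedLorentzCone p q) ⊆ extendedLorentzCone p q := by
  intro hsub
  set v : EuclideanSpace ℝ (Fin q) := EuclideanSpace.single ⟨0, hq⟩ 1
  have hv : ‖v‖ = 1 := by simp [v]
  have hmem : (EuclideanSpace.single ⟨1, hp⟩ 1, v) ∈ dualSet p q (extendedLorentzCone p q) := by
    refine (mem_dualSet_extendedLorentzCone_iff p q _ v).2 ⟨fun i => ?_, by simp [hv]⟩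
    by_cases h : i = ⟨1, hp⟩ <;> simp [h]
  have := hsub hmem ⟨0, by omega⟩
  norm_num [hv] at this

/-- The extended Lorentz cone is subdual (`L ⊆ L*`) and it is self-dual
(`L = L*`) if and only if `p = 1`. -/
theorem stmt2 (p q : ℕ) (hp : 0 < p) (hq : 0 < q) :
    extendedLorentzCone p q ⊆ dualSet p q (extendedLorentzCone p q) ∧
    (extendedLorentzCone p q = dualSet p q (extendedLorentzCone p q) ↔ p = 1) := by
  have hsub := extendedLorentzCone_subset_dualSet p q hp
  refine ⟨hsub, fun hEq => ?_, ?_⟩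
  · by_contra hne
    exact dualSet_extendedLorentzCone_not_subset p q (by omega) hq hEq.ge
  · rintro rfl
    exact hsub.antisymm (dualSet_extendedLorentzCone_subset_of_eq_one q)
end

section
/- The extended Lorentz cone L = {(x,u) ∈ ℝ^p × ℝ^q : x ≥ ‖u‖e} is a polyhedral cone (i.e., generated by finitely many vectors) if and only if q = 1. -/
/-- The cone generated by finitely many vectors `v¹,…,v^k`:
all nonnegative linear combinations `λ₁v¹ + … + λ_k v^k`. -/
def coneGen {V : Type*} [AddCommMonoid V] [Module ℝ V] {k : ℕ}
    (v : Fin k → V) : Set V :=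
  {z | ∃ lam : Fin k → ℝ, (∀ i, 0 ≤ lam i) ∧ z = ∑ i, lam i • v i}

/-!
If `q ≥ 2`, take any unit vector `w`. The point `(e, w)` lies in `L`, and the functional
`(x, u) ↦ x₀ - ⟪w, u⟫` is nonnegative on `L` and vanishes at `(e, w)`. Hence every generator
that occurs with positive weight in a conic representation of `(e, w)` lies on this face of `L`,
which forces its second component to be a nonnegative multiple of `w`. As one of these components
is nonzero, `w` is the normalised second component of some generator: finitely many generators
would give finitely many unit vectors, whereas the unit sphere of `ℝ^q` is connected and thus
infinite. For `q = 1` the decomposition `(x, u) = (x - |u| e, 0) + |u| (e, ±1)` shows that `L` is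
generated by the vectors `(eᵢ, 0)` and `(e, ±1)`.
-/

open Metric Set
open scoped RealInnerProductSpace

section ConicCombination

variable {V : Type*} [AddCommMonoid V] [Module ℝ V] {k : ℕ}

theorem coneGen_eq_hull (v : Fin k → V) : coneGen v = PointedCone.hull ℝ (range v) := by
  ext z
  rw [SetLike.mem_coe, Submodule.mem_span_range_iff_exists_fun]
  constructor
  · rintro ⟨lam, hlam, rfl⟩
    exact ⟨fun j => ⟨lam j, hlam j⟩, by simp⟩
  · rintro ⟨c, rfl⟩
    exact ⟨fun j => c j, fun j => (c j).2, by simp⟩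

theorem exists_coneGen_eq_hull {s : Set V} (hs : s.Finite) :
    ∃ (k : ℕ) (v : Fin k → V), coneGen v = PointedCone.hull ℝ s := by
  obtain ⟨k, v, -, rfl⟩ := hs.fin_param
  exact ⟨k, v, coneGen_eq_hull v⟩

theorem apply_mem_coneGen (v : Fin k → V) (j : Fin k) : v j ∈ coneGen v := by
  rw [coneGen_eq_hull]
  exact PointedCone.subset_hull (mem_range_self j)

theorem apply_eq_zero_of_apply_sum_eq_zero (φ : V →ₗ[ℝ] ℝ) {v : Fin k → V} {lam : Fin k → ℝ}
    (hlam : ∀ j, 0 ≤ lam j) (hφ : ∀ j, 0 ≤ φ (v j)) (h : φ (∑ j, lam j • v j) = 0) {j : Fin k}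
    (hj : lam j ≠ 0) : φ (v j) = 0 := by
  simp only [map_sum, map_smul, smul_eq_mul] at h
  have := (Finset.sum_eq_zero_iff_of_nonneg fun j _ => mul_nonneg (hlam j) (hφ j)).mp h j
    (Finset.mem_univ j)
  exact (mul_eq_zero.mp this).resolve_left hj

end ConicCombination

theorem Metric.sphere_infinite_of_one_lt_rank {E : Type*} [NormedAddCommGroup E] [NormedSpace ℝ E]
    (h : 1 < Module.rank ℝ E) (x : E) {r : ℝ} (hr : 0 < r) : (sphere x r).Infinite := by
  have : Nontrivial E := rank_pos_iff_nontrivial.mp (zero_lt_one.trans h)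
  obtain ⟨v, hv⟩ := (NormedSpace.sphere_nonempty (x := (0 : E))).mpr hr.le
  rw [mem_sphere_zero_iff_norm] at hv
  refine (isConnected_sphere h x hr.le).isPreconnected.infinite_of_nontrivial
    ⟨x + v, by simp [hv], x - v, by simp [hv], fun hvv => ?_⟩
  have : (2 : ℝ) • v = 0 := by
    rw [two_smul]
    simpa [sub_eq_add_neg, add_eq_zero_iff_eq_neg] using hvv
  exact ne_zero_of_norm_ne_zero (hv ▸ hr.ne') ((smul_eq_zero.mp this).resolve_left two_ne_zero)

theorem EuclideanSpace.eq_norm_smul_single_or_neg (u : EuclideanSpace ℝ (Fin 1)) :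
    u = ‖u‖ • EuclideanSpace.single 0 1 ∨ u = ‖u‖ • -EuclideanSpace.single 0 1 := by
  have hu : ‖u‖ = |u 0| := by simp [EuclideanSpace.norm_eq, Real.sqrt_sq_eq_abs]
  rcases abs_cases (u 0) with h | h
  · left; ext i; fin_cases i; simp [hu, h.1]
  · right; ext i; fin_cases i; simp [hu, h.1]

theorem prod_mk_zero_mem_hull_single {ι F : Type*} [Fintype ι] [DecidableEq ι] [AddCommMonoid F]
    [Module ℝ F] {y : EuclideanSpace ℝ ι} (hy : ∀ i, 0 ≤ y i) :
    (y, (0 : F)) ∈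
      PointedCone.hull ℝ (range fun i => (EuclideanSpace.single i (1 : ℝ), (0 : F))) := by
  have : (y, (0 : F)) = ∑ i, y i • (EuclideanSpace.single i (1 : ℝ), (0 : F)) := by
    ext <;> simp [Prod.fst_sum, Prod.snd_sum, WithLp.ofLp_sum, Pi.single_apply]
  rw [this]
  exact Submodule.sum_mem _ fun i _ =>
    PointedCone.smul_mem _ (hy i) (PointedCone.subset_hull (mem_range_self i))

def extendedLorentzPointedCone (p q : ℕ) :
    PointedCone ℝ (EuclideanSpace ℝ (Fin p) × EuclideanSpace ℝ (Fin q)) where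
  carrier := extendedLorentzCone p q
  add_mem' ha hb i := (norm_add_le _ _).trans (add_le_add (ha i) (hb i))
  zero_mem' i := by simp
  smul_mem' c z hz i := by
    change ‖(c : ℝ) • z.2‖ ≤ ((c : ℝ) • z.1) i
    rw [norm_smul, Real.norm_of_nonneg c.2]
    exact mul_le_mul_of_nonneg_left (hz i) c.2

section ExtendedLorentzCone

variable {p q : ℕ}

theorem inner_le_of_mem_extendedLorentzCone
    {z : EuclideanSpace ℝ (Fin p) × EuclideanSpace ℝ (Fin q)} (hz : z ∈ extendedLorentzCone p q)
    {w : EuclideanSpace ℝ (Fin q)} (hw : ‖w‖ = 1) (i : Fin p) :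
    ⟪w, z.2⟫ ≤ z.1 i :=
  calc ⟪w, z.2⟫ ≤ ‖w‖ * ‖z.2‖ := real_inner_le_norm _ _
    _ = ‖z.2‖ := by rw [hw, one_mul]
    _ ≤ z.1 i := hz i

theorem snd_eq_norm_smul_of_eq_inner {z : EuclideanSpace ℝ (Fin p) × EuclideanSpace ℝ (Fin q)}
    (hz : z ∈ extendedLorentzCone p q) {w : EuclideanSpace ℝ (Fin q)} (hw : ‖w‖ = 1) {i : Fin p}
    (h : z.1 i = ⟪w, z.2⟫) : z.2 = ‖z.2‖ • w := by
  have : ⟪w, z.2⟫ = ‖w‖ * ‖z.2‖ :=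
    le_antisymm (real_inner_le_norm _ _) (by rw [hw, one_mul, ← h]; exact hz i)
  simpa [hw] using (inner_eq_norm_mul_iff_real.mp this).symm

theorem sphere_subset_range_of_extendedLorentzCone_eq_coneGen {k : ℕ}
    {v : Fin k → EuclideanSpace ℝ (Fin p) × EuclideanSpace ℝ (Fin q)}
    (hL : extendedLorentzCone p q = coneGen v) (i : Fin p) :
    sphere 0 1 ⊆ range fun j => ‖(v j).2‖⁻¹ • (v j).2 := by
  intro w hw
  rw [mem_sphere_zero_iff_norm] at hw
  have hgen j : v j ∈ extendedLorentzCone p q := hL ▸ apply_mem_coneGen v j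
  obtain ⟨lam, hlam, hsum⟩ : (WithLp.toLp 2 fun _ => (1 : ℝ), w) ∈ coneGen v :=
    hL ▸ fun _ => by simp [hw]
  let φ : (EuclideanSpace ℝ (Fin p) × EuclideanSpace ℝ (Fin q)) →L[ℝ] ℝ :=
    (EuclideanSpace.proj i).comp (ContinuousLinearMap.fst ℝ _ _) -
      (innerSL ℝ w).comp (ContinuousLinearMap.snd ℝ _ _)
  have hφ z : φ z = z.1 i - ⟪w, z.2⟫ := rfl
  obtain ⟨j, -, hj⟩ : ∃ j ∈ Finset.univ, lam j • (v j).2 ≠ 0 := by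
    refine Finset.exists_ne_zero_of_sum_ne_zero ?_
    have hw_sum : w = ∑ j, lam j • (v j).2 := by simpa [Prod.snd_sum] using congrArg Prod.snd hsum
    exact hw_sum ▸ ne_zero_of_norm_ne_zero (by simp [hw])
  rw [smul_ne_zero_iff] at hj
  have hφj : φ (v j) = 0 := by
    refine apply_eq_zero_of_apply_sum_eq_zero φ.toLinearMap hlam
      (fun j => sub_nonneg.mpr (inner_le_of_mem_extendedLorentzCone (hgen j) hw i)) ?_ hj.1
    simp [← hsum, hφ, hw]
  have hdir := snd_eq_norm_smul_of_eq_inner (hgen j) hw (sub_eq_zero.mp hφj)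
  exact ⟨j, (congrArg _ hdir).trans (inv_smul_smul₀ (norm_ne_zero_iff.mpr hj.2) w)⟩

theorem le_one_of_extendedLorentzCone_eq_coneGen {k : ℕ} (hp : 0 < p)
    {v : Fin k → EuclideanSpace ℝ (Fin p) × EuclideanSpace ℝ (Fin q)}
    (hL : extendedLorentzCone p q = coneGen v) : q ≤ 1 := by
  by_contra! hq
  have hrank : 1 < Module.rank ℝ (EuclideanSpace ℝ (Fin q)) := by
    rw [← Module.finrank_eq_rank, finrank_euclideanSpace_fin]
    exact_mod_cast hq
  exact sphere_infinite_of_one_lt_rank hrank 0 one_pos <|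
    (finite_range _).subset (sphere_subset_range_of_extendedLorentzCone_eq_coneGen hL ⟨0, hp⟩)

end ExtendedLorentzCone

def extendedLorentzConeOneGenerators (p : ℕ) :
    Set (EuclideanSpace ℝ (Fin p) × EuclideanSpace ℝ (Fin 1)) :=
  range (fun i => (EuclideanSpace.single i 1, 0)) ∪
    {(WithLp.toLp 2 fun _ => 1, EuclideanSpace.single 0 1),
      (WithLp.toLp 2 fun _ => 1, -EuclideanSpace.single 0 1)}

theorem extendedLorentzCone_one_eq_hull (p : ℕ) :
    extendedLorentzCone p 1 = PointedCone.hull ℝ (extendedLorentzConeOneGenerators p) := by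
  apply subset_antisymm
  · rintro ⟨x, u⟩ hz
    set e : EuclideanSpace ℝ (Fin p) := WithLp.toLp 2 fun _ => 1
    have hx i : 0 ≤ (x - ‖u‖ • e) i := by simpa [e] using hz i
    obtain ⟨s, hs, hu⟩ : ∃ s, (e, s) ∈ extendedLorentzConeOneGenerators p ∧ u = ‖u‖ • s := by
      rcases u.eq_norm_smul_single_or_neg with hu | hu
      exacts [⟨_, Or.inr (Or.inl rfl), hu⟩, ⟨_, Or.inr (Or.inr rfl), hu⟩]
    have hsplit : (x, u) = (x - ‖u‖ • e, 0) + ‖u‖ • (e, s) := by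
      ext <;> simp [← hu]
    rw [hsplit]
    exact add_mem (Submodule.span_mono subset_union_left (prod_mk_zero_mem_hull_single hx))
      (PointedCone.smul_mem _ (norm_nonneg u) (PointedCone.subset_hull hs))
  · refine Submodule.span_le (p := extendedLorentzPointedCone p 1) |>.mpr ?_
    rintro _ (⟨i, rfl⟩ | rfl | rfl) j <;> simp [ite_nonneg]

/-- The extended Lorentz cone is polyhedral (generated by finitely many
vectors) if and only if `q = 1`. -/
theorem stmt3 (p q : ℕ) (hp : 0 < p) (hq : 0 < q) :
    (∃ (k : ℕ) (v : Fin k → EuclideanSpace ℝ (Fin p) × EuclideanSpace ℝ (Fin q)),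
      extendedLorentzCone p q = coneGen v) ↔ q = 1 := by
  constructor
  · rintro ⟨k, v, hL⟩
    have := le_one_of_extendedLorentzCone_eq_coneGen hp hL
    omega
  · rintro rfl
    obtain ⟨k, v, hv⟩ := exists_coneGen_eq_hull (s := extendedLorentzConeOneGenerators p)
      ((finite_range _).union (toFinite _))
    exact ⟨k, v, (extendedLorentzCone_one_eq_hull p).trans hv.symm⟩
end

section
/- Every cone K in ℝ^m (i.e., every closed set with K ∩ (−K) = {0} that is stable under nonnegative linear combinations) is regular: every sequence {x^n} in ℝ^m that is ≤_K-increasing and ≤_K-bounded from above is convergent. -/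
/-!
The order interval `[0, b]` of a closed salient cone in a finite-dimensional space is bounded:
otherwise normalising elements of growing norm yields a unit vector `c` with `c ∈ K` and, since
`(b - v) / ‖v‖ → -c`, also `-c ∈ K`. Hence an increasing sequence bounded above is norm bounded
and has cluster points. Every cluster point is an upper bound of the sequence, hence of every
other cluster point, so by salience there is only one, and the sequence converges to it.
-/

open Filter Topology Set

section ClusterPt

variable {ι E : Type*} [Preorder ι] [TopologicalSpace E] [AddGroup E] [ContinuousSub E]
  {K : Set E} {x : ι → E}

theorem sub_mem_of_mapClusterPt (hK : IsClosed K)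
    (hmono : ∀ n₁ n₂, n₁ ≤ n₂ → x n₂ - x n₁ ∈ K) {l : E} (hl : MapClusterPt l atTop x) (n : ι) :
    l - x n ∈ K :=
  (hK.preimage (continuous_id.sub continuous_const)).mem_of_mapClusterPt hl
    ((eventually_ge_atTop n).mono fun k hk => hmono n k hk)

theorem sub_mem_of_mapClusterPt_of_mapClusterPt (hK : IsClosed K)
    (hmono : ∀ n₁ n₂, n₁ ≤ n₂ → x n₂ - x n₁ ∈ K) {l₁ l₂ : E}
    (hl₁ : MapClusterPt l₁ atTop x) (hl₂ : MapClusterPt l₂ atTop x) : l₂ - l₁ ∈ K :=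
  (hK.preimage (continuous_const.sub continuous_id)).mem_of_mapClusterPt hl₁
    (Eventually.of_forall (sub_mem_of_mapClusterPt hK hmono hl₂))

theorem eq_of_mapClusterPt_of_mapClusterPt (hK : IsClosed K)
    (hsalient : ∀ v ∈ K, -v ∈ K → v = 0) (hmono : ∀ n₁ n₂, n₁ ≤ n₂ → x n₂ - x n₁ ∈ K)
    {l₁ l₂ : E} (hl₁ : MapClusterPt l₁ atTop x) (hl₂ : MapClusterPt l₂ atTop x) : l₁ = l₂ := by
  have h₁₂ := sub_mem_of_mapClusterPt_of_mapClusterPt hK hmono hl₁ hl₂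
  have h₂₁ := sub_mem_of_mapClusterPt_of_mapClusterPt hK hmono hl₂ hl₁
  rw [← neg_sub] at h₂₁
  exact (sub_eq_zero.1 (hsalient _ h₁₂ h₂₁)).symm

end ClusterPt

section Bounded

variable {E : Type*} [NormedAddCommGroup E] [NormedSpace ℝ E] [FiniteDimensional ℝ E] {K : Set E}

theorem isBounded_setOf_mem_and_sub_mem (hK : IsClosed K)
    (hsmul : ∀ c : ℝ, 0 ≤ c → ∀ v ∈ K, c • v ∈ K) (hsalient : ∀ v ∈ K, -v ∈ K → v = 0) (b : E) :
    Bornology.IsBounded {v | v ∈ K ∧ b - v ∈ K} := by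
  rw [isBounded_iff_forall_norm_le]
  by_contra! hunbounded
  choose v hv hnorm using fun n : ℕ => hunbounded n
  have hnorm_pos : ∀ n, 0 < ‖v n‖ := fun n => (Nat.cast_nonneg n).trans_lt (hnorm n)
  have hsphere : ∀ n, ‖v n‖⁻¹ • v n ∈ Metric.sphere (0 : E) 1 := fun n => by
    rw [mem_sphere_zero_iff_norm, norm_smul, norm_inv, norm_norm, inv_mul_cancel₀ (hnorm_pos n).ne']
  obtain ⟨c, hc, φ, hφ, hlim⟩ := (isCompact_sphere (0 : E) 1).tendsto_subseq hsphere
  have hinv : Tendsto (fun n => ‖v (φ n)‖⁻¹) atTop (𝓝 0) :=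
    tendsto_inv_atTop_zero.comp <| (tendsto_atTop_mono (fun n => (hnorm n).le)
      tendsto_natCast_atTop_atTop).comp hφ.tendsto_atTop
  have hcK : c ∈ K := hK.mem_of_tendsto hlim <| Eventually.of_forall fun n =>
    hsmul _ (inv_nonneg.2 (norm_nonneg _)) _ (hv (φ n)).1
  have hnegK : -c ∈ K := by
    refine hK.mem_of_tendsto (by simpa using (hinv.smul_const b).sub hlim) <|
      Eventually.of_forall fun n => ?_
    rw [← smul_sub]
    exact hsmul _ (inv_nonneg.2 (norm_nonneg _)) _ (hv (φ n)).2
  simp [hsalient c hcK hnegK] at hc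

theorem isBounded_range_of_sub_mem (hK : IsClosed K)
    (hsmul : ∀ c : ℝ, 0 ≤ c → ∀ v ∈ K, c • v ∈ K) (hsalient : ∀ v ∈ K, -v ∈ K → v = 0)
    {x : ℕ → E} (hmono : ∀ n₁ n₂, n₁ ≤ n₂ → x n₂ - x n₁ ∈ K) {y : E} (hy : ∀ n, y - x n ∈ K) :
    Bornology.IsBounded (range x) := by
  refine ((isBounded_setOf_mem_and_sub_mem hK hsmul hsalient (y - x 0)).vadd (x 0)).subset ?_
  rintro _ ⟨n, rfl⟩
  refine ⟨x n - x 0, ⟨hmono 0 n n.zero_le, ?_⟩, by simp⟩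
  simpa using hy n

end Bounded

/-- Every cone `K` in `ℝ^m` (a closed set with `K ∩ (−K) = {0}` stable under
nonnegative linear combinations) is regular: every sequence that is
`≤_K`-increasing and `≤_K`-bounded from above converges. -/
theorem stmt6 (m : ℕ) (K : Set (EuclideanSpace ℝ (Fin m)))
    (hKclosed : IsClosed K) (hKpointed : K ∩ (-K) = {0})
    (hKcone : ∀ lam mu : ℝ, 0 ≤ lam → 0 ≤ mu →
      ∀ x ∈ K, ∀ y ∈ K, lam • x + mu • y ∈ K)
    (x : ℕ → EuclideanSpace ℝ (Fin m))
    (hinc : ∀ n₁ n₂ : ℕ, n₁ ≤ n₂ → x n₂ - x n₁ ∈ K)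
    (hbdd : ∃ y, ∀ n, y - x n ∈ K) :
    ∃ l, Filter.Tendsto x Filter.atTop (nhds l) := by
  have hsmul : ∀ c : ℝ, 0 ≤ c → ∀ v ∈ K, c • v ∈ K := fun c hc v hv => by
    simpa using hKcone c 0 hc le_rfl v hv v hv
  have hsalient : ∀ v ∈ K, -v ∈ K → v = 0 := fun v hv hnv => hKpointed.subset ⟨hv, hnv⟩
  obtain ⟨y, hy⟩ := hbdd
  have hcompact : IsCompact (closure (range x)) :=
    (isBounded_range_of_sub_mem hKclosed hsmul hsalient hinc hy).isCompact_closure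
  have hmem : ∀ n, x n ∈ closure (range x) := fun n => subset_closure (mem_range_self n)
  obtain ⟨l, -, hl⟩ := hcompact.exists_mapClusterPt_of_frequently (l := atTop)
    (Frequently.of_forall hmem)
  exact ⟨l, hcompact.tendsto_nhds_of_unique_mapClusterPt (Eventually.of_forall hmem)
    fun l' _ hl' => eq_of_mapClusterPt_of_mapClusterPt hKclosed hsalient hinc hl' hl⟩
end

section
/- Let L ⊆ ℝ^p × ℝ^q be the extended Lorentz cone and let K = ℝ^p × C, where C is an arbitrary nonempty closed convex set in ℝ^q. Then K is an L-isotone projection set: for all z, w ∈ ℝ^p × ℝ^q, z ≤_L w implies P_K(z) ≤_L P_K(w). -/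
open scoped RealInnerProductSpace

/-- `P` is the metric projection onto `K ⊆ ℝ^p × ℝ^q` for the Euclidean
distance of `ℝ^{p+q}` (expressed with squared distances). -/
def IsMetricProjection {p q : ℕ}
    (K : Set (EuclideanSpace ℝ (Fin p) × EuclideanSpace ℝ (Fin q)))
    (P : EuclideanSpace ℝ (Fin p) × EuclideanSpace ℝ (Fin q) →
      EuclideanSpace ℝ (Fin p) × EuclideanSpace ℝ (Fin q)) : Prop :=
  ∀ z, P z ∈ K ∧ ∀ w ∈ K,
    ‖z.1 - (P z).1‖ ^ 2 + ‖z.2 - (P z).2‖ ^ 2 ≤ ‖z.1 - w.1‖ ^ 2 + ‖z.2 - w.2‖ ^ 2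

/-- Variational inequality for a minimizer over a convex set. -/
lemma proj_inner_le {q : ℕ} {C : Set (EuclideanSpace ℝ (Fin q))}
    (hCconv : Convex ℝ C) {u v : EuclideanSpace ℝ (Fin q)} (hv : v ∈ C)
    (hmin : ∀ c ∈ C, ‖u - v‖ ≤ ‖u - c‖) :
    ∀ c ∈ C, ⟪u - v, c - v⟫ ≤ 0 := by
  haveI : Nonempty ↑C := ⟨⟨v, hv⟩⟩
  rw [← norm_eq_iInf_iff_real_inner_le_zero hCconv hv]
  refine le_antisymm (le_ciInf fun c => hmin c c.2) ?_
  exact ciInf_le (f := fun w : C => ‖u - (w : EuclideanSpace ℝ (Fin q))‖)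
    ⟨0, by rintro x ⟨c, rfl⟩; positivity⟩ ⟨v, hv⟩

/-- The cylinder `K = ℝ^p × C`, for any nonempty closed convex `C ⊆ ℝ^q`,
is an `L`-isotone projection set for the extended Lorentz cone `L`. -/
theorem stmt8 (p q : ℕ) (hp : 0 < p) (hq : 0 < q)
    (C : Set (EuclideanSpace ℝ (Fin q)))
    (hCne : C.Nonempty) (hCclosed : IsClosed C) (hCconv : Convex ℝ C)
    (P : EuclideanSpace ℝ (Fin p) × EuclideanSpace ℝ (Fin q) →
      EuclideanSpace ℝ (Fin p) × EuclideanSpace ℝ (Fin q))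
    (hP : IsMetricProjection ((Set.univ : Set (EuclideanSpace ℝ (Fin p))) ×ˢ C) P) :
    ∀ z w, w - z ∈ extendedLorentzCone p q →
      P w - P z ∈ extendedLorentzCone p q := by
  -- First: structural facts about P
  have key : ∀ z, (P z).1 = z.1 ∧ (P z).2 ∈ C ∧
      ∀ c ∈ C, ‖z.2 - (P z).2‖ ≤ ‖z.2 - c‖ := by
    intro z
    obtain ⟨hmem, hmin⟩ := hP z
    have hC2 : (P z).2 ∈ C := hmem.2
    have h1 : (P z).1 = z.1 := by
      have := hmin (z.1, (P z).2) ⟨Set.mem_univ _, hC2⟩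
      simp only [sub_self, norm_zero] at this
      have hz : ‖z.1 - (P z).1‖ ^ 2 ≤ 0 := by nlinarith
      have : ‖z.1 - (P z).1‖ = 0 := by nlinarith [sq_nonneg ‖z.1 - (P z).1‖, norm_nonneg (z.1 - (P z).1)]
      have := norm_eq_zero.mp this
      have := sub_eq_zero.mp this
      exact this.symm
    refine ⟨h1, hC2, fun c hc => ?_⟩
    have := hmin (z.1, c) ⟨Set.mem_univ _, hc⟩
    rw [h1] at this
    simp only [sub_self, norm_zero] at this
    have h2 : ‖z.2 - (P z).2‖ ^ 2 ≤ ‖z.2 - c‖ ^ 2 := by nlinarith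
    nlinarith [norm_nonneg (z.2 - (P z).2), norm_nonneg (z.2 - c)]
  intro z w hzw
  obtain ⟨hz1, hz2, hzmin⟩ := key z
  obtain ⟨hw1, hw2, hwmin⟩ := key w
  intro i
  -- norm bound: nonexpansiveness
  set v1 := (P z).2
  set v2 := (P w).2
  have hv1 : ⟪z.2 - v1, v2 - v1⟫ ≤ 0 := proj_inner_le hCconv hz2 hzmin v2 hw2
  have hv2 : ⟪w.2 - v2, v1 - v2⟫ ≤ 0 := proj_inner_le hCconv hw2 hwmin v1 hz2
  have hsq : ‖v2 - v1‖ ^ 2 ≤ ⟪w.2 - z.2, v2 - v1⟫ := by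
    have expand : ⟪w.2 - z.2, v2 - v1⟫ - ‖v2 - v1‖ ^ 2
        = -⟪z.2 - v1, v2 - v1⟫ - ⟪w.2 - v2, v1 - v2⟫ := by
      rw [← real_inner_self_eq_norm_sq]
      rw [show v1 - v2 = -(v2 - v1) by abel]
      rw [inner_neg_right]
      rw [show w.2 - z.2 = (w.2 - v2) - (z.2 - v1) + (v2 - v1) by abel]
      rw [inner_add_left, inner_sub_left]
      ring
    nlinarith
  have hnorm : ‖v2 - v1‖ ≤ ‖w.2 - z.2‖ := by
    rcases eq_or_lt_of_le (norm_nonneg (v2 - v1)) with h0 | h0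
    · rw [← h0]; exact norm_nonneg _
    · have := real_inner_le_norm (w.2 - z.2) (v2 - v1)
      nlinarith
  have hgoal2 : (P w - P z).2 = v2 - v1 := rfl
  have hgoal1 : (P w - P z).1 i = (w - z).1 i := by
    have : (P w - P z).1 = w.1 - z.1 := by
      show (P w).1 - (P z).1 = w.1 - z.1
      rw [hz1, hw1]
    rw [this]; rfl
  rw [hgoal2, hgoal1]
  calc ‖v2 - v1‖ ≤ ‖w.2 - z.2‖ := hnorm
    _ = ‖(w - z).2‖ := rfl
    _ ≤ (w - z).1 i := hzw i
end

section
/- Let K ⊆ ℝ^m be a nonempty closed convex set, F : ℝ^m → ℝ^m a continuous mapping, and L ⊆ ℝ^m a cone. Define the Picard iteration x^{n+1} = P_K(x^n − F(x^n)). Suppose P_K and I − F are L-isotone, x⁰ ≤_L x¹, and there exists y ∈ ℝ^m such that x^n ≤_L y for all sufficiently large n. Then the sequence {x^n} is convergent and its limit x* is a solution of the variational inequality VI(F, K). -/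
open scoped RealInnerProductSpace
open Filter Topology Metric

/-!
The Picard iterates increase for the order of `L`: `x¹ - x⁰ ∈ L`, and isotonicity of `I - F` and
`P_K` propagates this to `x^{n+1} - x^n ∈ L`. A closed salient cone meets the unit sphere in a
compact set that stays a positive distance away from `-L`, so order intervals `[a, b]` are bounded,
hence compact, and the eventually bounded increasing sequence has cluster points. Each cluster
point dominates the whole sequence, so two cluster points dominate each other and coincide: the
sequence converges. Passing to the limit in the characterisation `⟪u - P u, w - P u⟫ ≤ 0` of the
projection at `u = x^n - F x^n` gives the variational inequality at the limit.
-/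

namespace ProperCone

section TopologicalModule

variable {E : Type*} [AddCommGroup E] [Module ℝ E] [TopologicalSpace E]

theorem exists_coe_eq {L : Set E} (hLclosed : IsClosed L) (hL0 : (0 : E) ∈ L)
    (hLcone : ∀ lam mu : ℝ, 0 ≤ lam → 0 ≤ mu → ∀ x ∈ L, ∀ y ∈ L, lam • x + mu • y ∈ L) :
    ∃ C : ProperCone ℝ E, (C : Set E) = L :=
  ⟨{ carrier := L
     add_mem' := fun hx hy => by simpa using hLcone 1 1 zero_le_one zero_le_one _ hx _ hy
     zero_mem' := hL0
     smul_mem' := fun c x hx => by simpa using hLcone c 0 c.2 le_rfl x hx 0 hL0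
     isClosed' := hLclosed }, rfl⟩

variable (C : ProperCone ℝ E)

theorem sub_mem_of_le {x : ℕ → E} (hx : ∀ n, x (n + 1) - x n ∈ C) {m n : ℕ} (hmn : m ≤ n) :
    x n - x m ∈ C := by
  induction n, hmn using Nat.le_induction with
  | base => simp
  | succ n _ ih => simpa using C.add_mem (hx n) ih

variable [ContinuousSub E]

theorem sub_mem_of_mapClusterPt {x : ℕ → E} (hx : ∀ n, x (n + 1) - x n ∈ C) {z : E}
    (hz : MapClusterPt z atTop x) (n : ℕ) : z - x n ∈ C :=
  (C.isClosed.preimage (continuous_sub_right (x n))).mem_of_mapClusterPt hz <|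
    (eventually_ge_atTop n).mono fun _ => C.sub_mem_of_le hx

theorem eq_of_mapClusterPt (hC : (C : ConvexCone ℝ E).Salient) {x : ℕ → E}
    (hx : ∀ n, x (n + 1) - x n ∈ C) {z z' : E} (hz : MapClusterPt z atTop x)
    (hz' : MapClusterPt z' atTop x) : z = z' := by
  have hle : ∀ {z z'}, MapClusterPt z atTop x → MapClusterPt z' atTop x → z' - z ∈ C :=
    fun hz hz' => (C.isClosed.preimage (continuous_sub_left _)).mem_of_mapClusterPt hz <|
      .of_forall (C.sub_mem_of_mapClusterPt hx hz')
  by_contra hne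
  exact hC _ (hle hz' hz) (sub_ne_zero.2 hne) (by rw [neg_sub]; exact hle hz hz')

end TopologicalModule

section Normed

variable {E : Type*} [NormedAddCommGroup E] [NormedSpace ℝ E] [ProperSpace E]
  (C : ProperCone ℝ E)

theorem isBounded_setOf_mem_and_sub_mem (hC : (C : ConvexCone ℝ E).Salient) (c : E) :
    Bornology.IsBounded {v | v ∈ C ∧ c - v ∈ C} := by
  obtain ⟨δ, hδ, hδle⟩ : ∃ δ, 0 < δ ∧ ∀ u ∈ (C : Set E) ∩ sphere 0 1, δ ≤ infDist (-u) C := by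
    refine ((isCompact_sphere 0 1).inter_left C.isClosed).exists_forall_le' (by fun_prop) ?_
    rintro u ⟨huC, hu⟩
    rw [← C.isClosed.notMem_iff_infDist_pos ⟨0, C.zero_mem⟩]
    exact hC u huC (ne_zero_of_mem_unit_sphere ⟨u, hu⟩)
  -- `‖v‖⁻¹ • v` is a unit vector of `C`, and `‖v‖⁻¹ • (c - v) ∈ C` is within `‖c‖ / ‖v‖` of its
  -- negative.
  refine isBounded_iff_forall_norm_le.2 ⟨‖c‖ / δ, ?_⟩
  rintro v ⟨hv, hcv⟩
  rcases eq_or_ne v 0 with rfl | hv0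
  · rw [norm_zero]; positivity
  have ht : 0 < ‖v‖ := norm_pos_iff.2 hv0
  have hu : ‖v‖⁻¹ • v ∈ (C : Set E) ∩ sphere 0 1 :=
    ⟨C.smul_mem hv (inv_nonneg.2 ht.le), by simp [norm_smul, ht.ne']⟩
  have hdist : infDist (-(‖v‖⁻¹ • v)) C ≤ ‖c‖ / ‖v‖ := calc
    infDist (-(‖v‖⁻¹ • v)) C ≤ dist (-(‖v‖⁻¹ • v)) (‖v‖⁻¹ • (c - v)) :=
      infDist_le_dist_of_mem (C.smul_mem hcv (inv_nonneg.2 ht.le))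
    _ = ‖c‖ / ‖v‖ := by
      rw [dist_eq_norm, smul_sub, show ∀ a b : E, -b - (a - b) = -a by intros; abel,
        norm_neg, norm_smul, norm_inv, norm_norm, inv_mul_eq_div]
  rw [le_div_iff₀ hδ, mul_comm]
  exact (le_div_iff₀ ht).1 ((hδle _ hu).trans hdist)

theorem isCompact_setOf_sub_mem_and_sub_mem (hC : (C : ConvexCone ℝ E).Salient) (a b : E) :
    IsCompact {w | w - a ∈ C ∧ b - w ∈ C} := by
  refine isCompact_of_isClosed_isBounded ?_ ?_
  · exact (C.isClosed.preimage (continuous_sub_right a)).inter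
      (C.isClosed.preimage (continuous_sub_left b))
  · have h := (C.isBounded_setOf_mem_and_sub_mem hC (b - a)).vadd a
    refine h.subset fun w hw => ⟨w - a, ⟨hw.1, by rw [sub_sub_sub_cancel_right]; exact hw.2⟩, ?_⟩
    simp

theorem exists_tendsto_of_succ_sub_mem (hC : (C : ConvexCone ℝ E).Salient)
    {x : ℕ → E} (hx : ∀ n, x (n + 1) - x n ∈ C) {y : E} (hy : ∀ᶠ n in atTop, y - x n ∈ C) :
    ∃ z, Tendsto x atTop (𝓝 z) := by
  have hS := C.isCompact_setOf_sub_mem_and_sub_mem hC (x 0) y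
  have hmem : ∀ᶠ n in atTop, x n ∈ {w | w - x 0 ∈ C ∧ y - w ∈ C} :=
    hy.mono fun n hn => ⟨C.sub_mem_of_le hx n.zero_le, hn⟩
  obtain ⟨z, -, hz⟩ := hS.exists_mapClusterPt_of_frequently hmem.frequently
  exact ⟨z, hS.tendsto_nhds_of_unique_mapClusterPt hmem
    fun z' _ hz' => C.eq_of_mapClusterPt hC hx hz' hz⟩

end Normed

end ProperCone

section VariationalInequality

variable {E : Type*} [NormedAddCommGroup E] [InnerProductSpace ℝ E] {K : Set E}

theorem inner_sub_le_zero_of_forall_dist_le (hK : Convex ℝ K) {u p : E} (hp : p ∈ K)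
    (hmin : ∀ y ∈ K, dist u p ≤ dist u y) {w : E} (hw : w ∈ K) : ⟪u - p, w - p⟫ ≤ 0 := by
  refine (norm_eq_iInf_iff_real_inner_le_zero hK hp).1 ?_ w hw
  have : Nonempty K := ⟨⟨p, hp⟩⟩
  refine le_antisymm (le_ciInf fun y => ?_) (ciInf_le (f := fun y : K => ‖u - y‖) ⟨0, ?_⟩ ⟨p, hp⟩)
  · simpa only [dist_eq_norm] using hmin y y.2
  · rintro _ ⟨y, rfl⟩
    exact norm_nonneg _

theorem mem_and_inner_nonneg_of_tendsto_picard (hKclosed : IsClosed K) (hKconv : Convex ℝ K)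
    {F P : E → E} (hF : Continuous F) (hP : ∀ x, P x ∈ K ∧ ∀ y ∈ K, dist x (P x) ≤ dist x y)
    {x : ℕ → E} (hiter : ∀ n, x (n + 1) = P (x n - F (x n))) {xs : E}
    (hx : Tendsto x atTop (𝓝 xs)) : xs ∈ K ∧ ∀ y ∈ K, 0 ≤ ⟪y - xs, F xs⟫ := by
  have hx1 : Tendsto (fun n => x (n + 1)) atTop (𝓝 xs) := hx.comp (tendsto_add_atTop_nat 1)
  refine ⟨hKclosed.mem_of_tendsto hx1 (.of_forall fun n => hiter n ▸ (hP _).1), fun y hy => ?_⟩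
  have hlim : Tendsto (fun n => ⟪(x n - F (x n)) - x (n + 1), y - x (n + 1)⟫) atTop
      (𝓝 ⟪(xs - F xs) - xs, y - xs⟫) :=
    ((hx.sub ((hF.tendsto xs).comp hx)).sub hx1).inner (tendsto_const_nhds.sub hx1)
  have hle : ⟪(xs - F xs) - xs, y - xs⟫ ≤ 0 := le_of_tendsto' hlim fun n => by
    rw [hiter n]
    exact inner_sub_le_zero_of_forall_dist_le hKconv (hP _).1 (hP _).2 hy
  rw [sub_sub_cancel_left, inner_neg_left, real_inner_comm] at hle
  linarith

end VariationalInequality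

theorem stmt12_general (m : ℕ) (K : Set (EuclideanSpace ℝ (Fin m)))
    (hKclosed : IsClosed K) (hKconv : Convex ℝ K)
    (F : EuclideanSpace ℝ (Fin m) → EuclideanSpace ℝ (Fin m))
    (hFcont : Continuous F)
    (L : Set (EuclideanSpace ℝ (Fin m)))
    (hLclosed : IsClosed L) (hLpointed : L ∩ (-L) = {0})
    (hLcone : ∀ lam mu : ℝ, 0 ≤ lam → 0 ≤ mu →
      ∀ x ∈ L, ∀ y ∈ L, lam • x + mu • y ∈ L)
    (P : EuclideanSpace ℝ (Fin m) → EuclideanSpace ℝ (Fin m))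
    (hP : ∀ x, P x ∈ K ∧ ∀ y ∈ K, dist x (P x) ≤ dist x y)
    (hPiso : ∀ x y, y - x ∈ L → P y - P x ∈ L)
    (hIFiso : ∀ x y, y - x ∈ L → (y - F y) - (x - F x) ∈ L)
    (x : ℕ → EuclideanSpace ℝ (Fin m))
    (hiter : ∀ n : ℕ, x (n + 1) = P (x n - F (x n)))
    (h01 : x 1 - x 0 ∈ L)
    (hbdd : ∃ (y : EuclideanSpace ℝ (Fin m)) (N : ℕ), ∀ n ≥ N, y - x n ∈ L) :
    ∃ xs, Filter.Tendsto x Filter.atTop (nhds xs) ∧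
      xs ∈ K ∧ ∀ y ∈ K, (0:ℝ) ≤ ⟪y - xs, F xs⟫ := by
  obtain ⟨C, rfl⟩ := ProperCone.exists_coe_eq hLclosed (hLpointed.ge rfl).1 hLcone
  have hstep : ∀ n, x (n + 1) - x n ∈ C := by
    intro n
    induction n with
    | zero => exact h01
    | succ n ih => simpa only [← hiter, SetLike.mem_coe] using hPiso _ _ (hIFiso _ _ ih)
  obtain ⟨y, N, hy⟩ := hbdd
  obtain ⟨xs, hxs⟩ := C.exists_tendsto_of_succ_sub_mem
    ((PointedCone.salient_iff_inter_neg_eq_singleton _).2 hLpointed) hstep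
    (eventually_atTop.2 ⟨N, hy⟩)
  exact ⟨xs, hxs, mem_and_inner_nonneg_of_tendsto_picard hKclosed hKconv hFcont hP hiter hxs⟩

/-- If `P_K` and `I − F` are `L`-isotone, `x⁰ ≤_L x¹` for the Picard
iteration `x^{n+1} = P_K(x^n − F(x^n))`, and the iterates are eventually
`L`-bounded above, then the iteration converges and its limit solves the
variational inequality `VI(F, K)`. -/
theorem stmt12 (m : ℕ) (K : Set (EuclideanSpace ℝ (Fin m)))
    (hKne : K.Nonempty) (hKclosed : IsClosed K) (hKconv : Convex ℝ K)
    (F : EuclideanSpace ℝ (Fin m) → EuclideanSpace ℝ (Fin m))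
    (hFcont : Continuous F)
    (L : Set (EuclideanSpace ℝ (Fin m)))
    (hLclosed : IsClosed L) (hLpointed : L ∩ (-L) = {0})
    (hLcone : ∀ lam mu : ℝ, 0 ≤ lam → 0 ≤ mu →
      ∀ x ∈ L, ∀ y ∈ L, lam • x + mu • y ∈ L)
    (P : EuclideanSpace ℝ (Fin m) → EuclideanSpace ℝ (Fin m))
    (hP : ∀ x, P x ∈ K ∧ ∀ y ∈ K, dist x (P x) ≤ dist x y)
    (hPiso : ∀ x y, y - x ∈ L → P y - P x ∈ L)
    (hIFiso : ∀ x y, y - x ∈ L → (y - F y) - (x - F x) ∈ L)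
    (x : ℕ → EuclideanSpace ℝ (Fin m))
    (hiter : ∀ n : ℕ, x (n + 1) = P (x n - F (x n)))
    (h01 : x 1 - x 0 ∈ L)
    (hbdd : ∃ (y : EuclideanSpace ℝ (Fin m)) (N : ℕ), ∀ n ≥ N, y - x n ∈ L) :
    ∃ xs, Filter.Tendsto x Filter.atTop (nhds xs) ∧
      xs ∈ K ∧ ∀ y ∈ K, (0:ℝ) ≤ ⟪y - xs, F xs⟫ :=
  stmt12_general m K hKclosed hKconv F hFcont L hLclosed hLpointed hLcone P hP hPiso hIFiso x hiter
    h01 hbdd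
end

section
/- Let K ⊆ ℝ^m be a nonempty closed convex set, F : ℝ^m → ℝ^m continuous, L ⊆ ℝ^m a cone, and x⁰ ∈ ℝ^m. Suppose P_K and I − F are L-isotone. Define Ω = {x ∈ K ∩ (x⁰ + L) : F(x) ∈ L} and Γ = {x ∈ K ∩ (x⁰ + L) : P_K(x − F(x)) ≤_L x}. Then Ω ⊆ Γ. -/
/-- If `P_K` and `I − F` are `L`-isotone, then
`Ω = {x ∈ K ∩ (x⁰ + L) : F(x) ∈ L}` is contained in
`Γ = {x ∈ K ∩ (x⁰ + L) : P_K(x − F(x)) ≤_L x}`. -/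
theorem stmt13 (m : ℕ) (K : Set (EuclideanSpace ℝ (Fin m)))
    (hKne : K.Nonempty) (hKclosed : IsClosed K) (hKconv : Convex ℝ K)
    (F : EuclideanSpace ℝ (Fin m) → EuclideanSpace ℝ (Fin m))
    (hFcont : Continuous F)
    (L : Set (EuclideanSpace ℝ (Fin m)))
    (hLclosed : IsClosed L) (hLpointed : L ∩ (-L) = {0})
    (hLcone : ∀ lam mu : ℝ, 0 ≤ lam → 0 ≤ mu →
      ∀ x ∈ L, ∀ y ∈ L, lam • x + mu • y ∈ L)
    (P : EuclideanSpace ℝ (Fin m) → EuclideanSpace ℝ (Fin m))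
    (hP : ∀ x, P x ∈ K ∧ ∀ y ∈ K, dist x (P x) ≤ dist x y)
    (hPiso : ∀ x y, y - x ∈ L → P y - P x ∈ L)
    (hIFiso : ∀ x y, y - x ∈ L → (y - F y) - (x - F x) ∈ L)
    (x0 : EuclideanSpace ℝ (Fin m)) :
    {x | x ∈ K ∧ x - x0 ∈ L ∧ F x ∈ L} ⊆
      {x | x ∈ K ∧ x - x0 ∈ L ∧ x - P (x - F x) ∈ L} := by
  rintro x ⟨hxK, hx0, hFx⟩
  refine ⟨hxK, hx0, ?_⟩
  have hPx : P x = x := by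
    have h := (hP x).2 x hxK
    rw [dist_self] at h
    have : dist x (P x) = 0 := le_antisymm h dist_nonneg
    exact (dist_eq_zero.mp this).symm
  have : x - (x - F x) ∈ L := by
    simpa using hFx
  have := hPiso (x - F x) x this
  rwa [hPx] at this
end

section
/- Let K ⊆ ℝ^m be a nonempty closed convex set, F : ℝ^m → ℝ^m continuous, and L ⊆ ℝ^m a cone. Consider the sequence x^{n+1} = P_K(x^n − F(x^n)). Suppose P_K and I − F are L-isotone and x⁰ ≤_L x¹. Define Γ = {x ∈ K ∩ (x⁰ + L) : P_K(x − F(x)) ≤_L x}. If Γ ≠ ∅, then {x^n} is convergent, its limit x* is a solution of the variational inequality VI(F, K), and x* is the L-least element of Γ (i.e., x* ∈ Γ and x* ≤_L y for all y ∈ Γ). -/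
open scoped RealInnerProductSpace

/-- If `P_K` and `I − F` are `L`-isotone, `x⁰ ≤_L x¹` for the Picard
iteration `x^{n+1} = P_K(x^n − F(x^n))`, and
`Γ = {x ∈ K ∩ (x⁰ + L) : P_K(x − F(x)) ≤_L x}` is nonempty, then the
iteration converges, its limit `x*` solves `VI(F, K)`, and `x*` is the
`L`-least element of `Γ`. -/
theorem stmt14 (m : ℕ) (K : Set (EuclideanSpace ℝ (Fin m)))
    (hKne : K.Nonempty) (hKclosed : IsClosed K) (hKconv : Convex ℝ K)
    (F : EuclideanSpace ℝ (Fin m) → EuclideanSpace ℝ (Fin m))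
    (hFcont : Continuous F)
    (L : Set (EuclideanSpace ℝ (Fin m)))
    (hLclosed : IsClosed L) (hLpointed : L ∩ (-L) = {0})
    (hLcone : ∀ lam mu : ℝ, 0 ≤ lam → 0 ≤ mu →
      ∀ x ∈ L, ∀ y ∈ L, lam • x + mu • y ∈ L)
    (P : EuclideanSpace ℝ (Fin m) → EuclideanSpace ℝ (Fin m))
    (hP : ∀ x, P x ∈ K ∧ ∀ y ∈ K, dist x (P x) ≤ dist x y)
    (hPiso : ∀ x y, y - x ∈ L → P y - P x ∈ L)
    (hIFiso : ∀ x y, y - x ∈ L → (y - F y) - (x - F x) ∈ L)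
    (x : ℕ → EuclideanSpace ℝ (Fin m))
    (hiter : ∀ n : ℕ, x (n + 1) = P (x n - F (x n)))
    (h01 : x 1 - x 0 ∈ L)
    (hΓne : {z | z ∈ K ∧ z - x 0 ∈ L ∧ z - P (z - F z) ∈ L}.Nonempty) :
    ∃ xs, Filter.Tendsto x Filter.atTop (nhds xs) ∧
      xs ∈ K ∧ (∀ y ∈ K, (0:ℝ) ≤ ⟪y - xs, F xs⟫) ∧
      xs ∈ {z | z ∈ K ∧ z - x 0 ∈ L ∧ z - P (z - F z) ∈ L} ∧
      ∀ y ∈ {z | z ∈ K ∧ z - x 0 ∈ L ∧ z - P (z - F z) ∈ L}, y - xs ∈ L := by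
  classical
  obtain ⟨z, hzK, hzx0, hzfix⟩ := hΓne
  -- basic cone facts
  have h0L : (0 : EuclideanSpace ℝ (Fin m)) ∈ L := by
    have h : (0 : EuclideanSpace ℝ (Fin m)) ∈ L ∩ (-L) := by
      rw [hLpointed]; exact Set.mem_singleton 0
    exact h.1
  have hadd : ∀ a ∈ L, ∀ b ∈ L, a + b ∈ L := by
    intro a ha b hb
    have := hLcone 1 1 zero_le_one zero_le_one a ha b hb
    simpa using this
  have hsmul : ∀ (t : ℝ), 0 ≤ t → ∀ a ∈ L, t • a ∈ L := by
    intro t ht a ha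
    have := hLcone t 0 ht le_rfl a ha a ha
    simpa using this
  have hpointed : ∀ a ∈ L, -a ∈ L → a = 0 := by
    intro a ha hna
    have h : a ∈ L ∩ (-L) := ⟨ha, by simpa using hna⟩
    rw [hLpointed] at h; simpa using h
  -- normality of the cone
  have hnorm : ∃ c : ℝ, 0 < c ∧ ∀ a b, a ∈ L → b - a ∈ L → ‖a‖ ≤ c * ‖b‖ := by
    by_contra hcon
    push_neg at hcon
    have key : ∀ n : ℕ, ∃ a b, a ∈ L ∧ b - a ∈ L ∧ ((n : ℝ) + 1) * ‖b‖ < ‖a‖ := by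
      intro n
      obtain ⟨a, b, ha, hb, hlt⟩ := hcon ((n : ℝ) + 1) (by positivity)
      exact ⟨a, b, ha, hb, hlt⟩
    choose a b ha hba hlt using key
    have hane : ∀ n, a n ≠ 0 := by
      intro n h
      have h2 := hlt n
      rw [h, norm_zero] at h2
      nlinarith [norm_nonneg (b n)]
    have hapos : ∀ n, (0:ℝ) < ‖a n‖ := fun n => norm_pos_iff.2 (hane n)
    set a' : ℕ → EuclideanSpace ℝ (Fin m) := fun n => ‖a n‖⁻¹ • a n with ha'def
    set b' : ℕ → EuclideanSpace ℝ (Fin m) := fun n => ‖a n‖⁻¹ • b n with hb'def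
    have ha' : ∀ n, a' n ∈ L := fun n =>
      hsmul _ (inv_nonneg.2 (norm_nonneg _)) _ (ha n)
    have hba' : ∀ n, b' n - a' n ∈ L := by
      intro n
      have h : b' n - a' n = ‖a n‖⁻¹ • (b n - a n) := by
        rw [ha'def, hb'def]; simp [smul_sub]
      rw [h]
      exact hsmul _ (inv_nonneg.2 (norm_nonneg _)) _ (hba n)
    have hna' : ∀ n, ‖a' n‖ = 1 := by
      intro n
      rw [ha'def]
      simp only [norm_smul, norm_inv, norm_norm]
      exact inv_mul_cancel₀ (hapos n).ne'
    have hnb' : ∀ n, ‖b' n‖ < 1 / ((n : ℝ) + 1) := by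
      intro n
      have h : ‖b' n‖ = ‖b n‖ / ‖a n‖ := by
        rw [hb'def]
        simp only [norm_smul, norm_inv, norm_norm]
        rw [inv_mul_eq_div]
      rw [h, div_lt_div_iff₀ (hapos n) (by positivity)]
      nlinarith [hlt n]
    -- extract a convergent subsequence on the unit sphere
    have hmem : ∀ n, a' n ∈ Metric.sphere (0 : EuclideanSpace ℝ (Fin m)) 1 := by
      intro n
      rw [Metric.mem_sphere, dist_zero_right]
      exact hna' n
    obtain ⟨u, hu, φ, hφ, hφtend⟩ :=
      (isCompact_sphere (0 : EuclideanSpace ℝ (Fin m)) 1).tendsto_subseq hmem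
    have huL : u ∈ L := hLclosed.mem_of_tendsto hφtend
      (Filter.Eventually.of_forall fun k => ha' (φ k))
    have hb'tend : Filter.Tendsto (fun k => b' (φ k)) Filter.atTop (nhds 0) := by
      have hg : ∀ k : ℕ, ‖b' (φ k)‖ ≤ 1 / ((k : ℝ) + 1) := by
        intro k
        refine (hnb' (φ k)).le.trans ?_
        apply one_div_le_one_div_of_le (by positivity)
        have hk : (k : ℝ) ≤ (φ k : ℝ) := Nat.cast_le.2 hφ.le_apply
        linarith
      exact squeeze_zero_norm hg tendsto_one_div_add_atTop_nhds_zero_nat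
    have hnegu : -u ∈ L := by
      have htend : Filter.Tendsto (fun k => b' (φ k) - a' (φ k)) Filter.atTop (nhds (-u)) := by
        have := hb'tend.sub hφtend
        simpa using this
      exact hLclosed.mem_of_tendsto htend
        (Filter.Eventually.of_forall fun k => hba' (φ k))
    have : u = 0 := hpointed u huL hnegu
    rw [Metric.mem_sphere, dist_zero_right, this, norm_zero] at hu
    norm_num at hu
  obtain ⟨c, hc, hnormal⟩ := hnorm
  -- projection characterization
  have hvar : ∀ u, ∀ w ∈ K, ⟪u - P u, w - P u⟫ ≤ 0 := by
    intro u
    haveI : Nonempty K := ⟨⟨P u, (hP u).1⟩⟩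
    have h1 : ‖u - P u‖ = ⨅ w : K, ‖u - w‖ := by
      apply le_antisymm
      · exact le_ciInf fun w => by
          simpa [dist_eq_norm] using (hP u).2 w w.2
      · exact ciInf_le ⟨0, by rintro _ ⟨w, rfl⟩; exact norm_nonneg _⟩
          (⟨P u, (hP u).1⟩ : K)
    exact (norm_eq_iInf_iff_real_inner_le_zero hKconv (hP u).1).1 h1
  -- P is nonexpansive, hence continuous
  have hPlip : ∀ u v, ‖P u - P v‖ ≤ ‖u - v‖ := by
    intro u v
    by_cases hd : P u - P v = 0
    · rw [hd, norm_zero]; exact norm_nonneg _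
    have hdpos : (0:ℝ) < ‖P u - P v‖ := norm_pos_iff.2 hd
    have h1 := hvar u (P v) (hP v).1
    have h2 := hvar v (P u) (hP u).1
    set d := P u - P v with hdd
    have e1 : ⟪u - v, d⟫ = ⟪u - P u, d⟫ - ⟪v - P v, d⟫ + ⟪d, d⟫ := by
      rw [← inner_sub_left, ← inner_add_left]
      congr 1
      rw [hdd]; abel
    have h1' : 0 ≤ ⟪u - P u, d⟫ := by
      have e : P v - P u = -d := by rw [hdd]; abel
      rw [e, inner_neg_right] at h1
      linarith
    have hle := real_inner_le_norm (u - v) d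
    have hsq : ⟪d, d⟫ = ‖d‖ ^ 2 := real_inner_self_eq_norm_sq d
    nlinarith [norm_nonneg (u - v)]
  have hPcont : Continuous P := by
    have : LipschitzWith 1 P := LipschitzWith.of_dist_le_mul fun u v => by
      simpa [dist_eq_norm, one_mul] using hPlip u v
    exact this.continuous
  -- monotonicity of the iteration
  have mono : ∀ n, x (n + 1) - x n ∈ L := by
    intro n
    induction n with
    | zero => exact h01
    | succ k ih =>
      have ih' := ih
      rw [hiter k] at ih'
      rw [hiter (k + 1), hiter k]
      exact hPiso _ _ (hIFiso _ _ ih')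
  have chain : ∀ n k, n ≤ k → x k - x n ∈ L := by
    intro n k hnk
    induction k, hnk using Nat.le_induction with
    | base => simpa using h0L
    | succ k hk ih =>
      have h : x (k + 1) - x n = (x (k + 1) - x k) + (x k - x n) := by abel
      rw [h]
      exact hadd _ (mono k) _ ih
  -- any element of Γ is an upper bound of the whole sequence
  have hubgen : ∀ y, y ∈ K → y - x 0 ∈ L → y - P (y - F y) ∈ L →
      ∀ n, y - x n ∈ L := by
    intro y _ hy0 hyfix n
    induction n with
    | zero => exact hy0
    | succ k ih =>
      have h2 : P (y - F y) - x (k + 1) ∈ L := by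
        rw [hiter k]
        exact hPiso _ _ (hIFiso _ _ ih)
      have h : y - x (k + 1) = (y - P (y - F y)) + (P (y - F y) - x (k + 1)) := by abel
      rw [h]
      exact hadd _ hyfix _ h2
  have hub := hubgen z hzK hzx0 hzfix
  -- the sequence is bounded
  have hbound : ∀ n, x n ∈ Metric.closedBall (x 0) (c * ‖z - x 0‖) := by
    intro n
    rw [Metric.mem_closedBall, dist_eq_norm]
    apply hnormal (x n - x 0) (z - x 0) (chain 0 n (Nat.zero_le n))
    have h : z - x 0 - (x n - x 0) = z - x n := by abel
    rw [h]
    exact hub n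
  obtain ⟨xs, -, φ, hφ, hφtend⟩ :=
    (isCompact_closedBall (x 0) (c * ‖z - x 0‖)).tendsto_subseq hbound
  -- the subsequential limit is an upper bound for the sequence
  have hupper : ∀ n, xs - x n ∈ L := by
    intro n
    have htend : Filter.Tendsto (fun k => x (φ k) - x n) Filter.atTop (nhds (xs - x n)) :=
      hφtend.sub tendsto_const_nhds
    refine hLclosed.mem_of_tendsto htend (Filter.eventually_atTop.2 ⟨n, fun k hk => ?_⟩)
    exact chain n (φ k) (le_trans hk (hφ.le_apply))
  -- the whole sequence converges
  have hconv : Filter.Tendsto x Filter.atTop (nhds xs) := by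
    rw [Metric.tendsto_atTop]
    intro ε hε
    have htend0 : Filter.Tendsto (fun k => ‖xs - x (φ k)‖) Filter.atTop (nhds 0) := by
      have h' : Filter.Tendsto (fun k => xs - x (φ k)) Filter.atTop (nhds 0) := by
        simpa using hφtend.const_sub xs
      simpa using h'.norm
    obtain ⟨k, hk⟩ :=
      (htend0.eventually_lt_const (show (0:ℝ) < ε / c by positivity)).exists
    refine ⟨φ k, fun n hn => ?_⟩
    rw [dist_eq_norm]
    have h1 : xs - x n ∈ L := hupper n
    have h2 : (xs - x (φ k)) - (xs - x n) ∈ L := by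
      have h : (xs - x (φ k)) - (xs - x n) = x n - x (φ k) := by abel
      rw [h]
      exact chain _ _ hn
    calc ‖x n - xs‖ = ‖xs - x n‖ := norm_sub_rev _ _
      _ ≤ c * ‖xs - x (φ k)‖ := hnormal _ _ h1 h2
      _ < c * (ε / c) := mul_lt_mul_of_pos_left hk hc
      _ = ε := by field_simp
  -- the limit is a fixed point
  have hfix : xs = P (xs - F xs) := by
    have h1 : Filter.Tendsto (fun n => x (n + 1)) Filter.atTop (nhds xs) :=
      hconv.comp (Filter.tendsto_add_atTop_nat 1)
    have h2 : Filter.Tendsto (fun n => P (x n - F (x n))) Filter.atTop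
        (nhds (P (xs - F xs))) :=
      ((hPcont.comp (continuous_id.sub hFcont)).tendsto xs).comp hconv
    have h3 : (fun n => x (n + 1)) = fun n => P (x n - F (x n)) := funext hiter
    rw [h3] at h1
    exact tendsto_nhds_unique h1 h2
  have hxsK : xs ∈ K := by rw [hfix]; exact (hP _).1
  -- variational inequality
  have hVI : ∀ y ∈ K, (0:ℝ) ≤ ⟪y - xs, F xs⟫ := by
    intro y hy
    have h := hvar (xs - F xs) y hy
    rw [← hfix] at h
    have e : xs - F xs - xs = -(F xs) := by abel
    rw [e, inner_neg_left] at h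
    rw [real_inner_comm]
    linarith
  refine ⟨xs, hconv, hxsK, hVI, ⟨hxsK, hupper 0, ?_⟩, ?_⟩
  · rw [← hfix]
    simpa using h0L
  · intro y hy
    have h := hubgen y hy.1 hy.2.1 hy.2.2
    have htend : Filter.Tendsto (fun n => y - x n) Filter.atTop (nhds (y - xs)) :=
      hconv.const_sub y
    exact hLclosed.mem_of_tendsto htend (Filter.Eventually.of_forall h)
end

section
/- Let K = B × C ⊆ ℝ^p × ℝ^q be a box, where B = ×_{i=1}^p [a_i, b_i] ⊆ ℝ^p and C = ×_{j=1}^q [a_{p+j}, b_{p+j}] ⊆ ℝ^q with a_ℓ ∈ ℝ ∪ {−∞}, b_ℓ ∈ ℝ ∪ {+∞}, a_ℓ < b_ℓ (C nonempty and closed), and let L be the extended Lorentz cone in ℝ^p × ℝ^q. Then the projection P_K is L-isotone if and only if B = ℝ^p (i.e., a_i = −∞ and b_i = +∞ for all i = 1,…,p). -/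
open Set RealInnerProductSpace

def box {n : ℕ} (a b : Fin n → EReal) : Set (EuclideanSpace ℝ (Fin n)) :=
  {x | ∀ i, a i ≤ (x i : EReal) ∧ (x i : EReal) ≤ b i}

def LorentzIsotone {p q : ℕ}
    (P : EuclideanSpace ℝ (Fin p) × EuclideanSpace ℝ (Fin q) →
      EuclideanSpace ℝ (Fin p) × EuclideanSpace ℝ (Fin q)) : Prop :=
  ∀ z w, w - z ∈ extendedLorentzCone p q → P w - P z ∈ extendedLorentzCone p q

section Convex

variable {F : Type*} [NormedAddCommGroup F] [InnerProductSpace ℝ F] {K : Set F}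

theorem Convex.inner_sub_nonpos_of_isMinOn (hK : Convex ℝ K) {u v w : F} (hv : v ∈ K)
    (hmin : IsMinOn (‖u - ·‖) K v) (hw : w ∈ K) : ⟪u - v, w - v⟫ ≤ 0 := by
  have : Nonempty K := ⟨⟨v, hv⟩⟩
  refine (norm_eq_iInf_iff_real_inner_le_zero hK hv).1 (le_antisymm ?_ ?_) w hw
  · exact le_ciInf fun w => isMinOn_iff.1 hmin w w.2
  · exact ciInf_le ⟨0, by rintro _ ⟨w, rfl⟩; positivity⟩ (⟨v, hv⟩ : K)

theorem Convex.norm_sub_le_of_isMinOn (hK : Convex ℝ K) {u₁ u₂ v₁ v₂ : F}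
    (hv₁ : v₁ ∈ K) (hv₂ : v₂ ∈ K) (h₁ : IsMinOn (‖u₁ - ·‖) K v₁)
    (h₂ : IsMinOn (‖u₂ - ·‖) K v₂) : ‖v₂ - v₁‖ ≤ ‖u₂ - u₁‖ := by
  have i₁ := hK.inner_sub_nonpos_of_isMinOn hv₁ h₁ hv₂
  have i₂ := hK.inner_sub_nonpos_of_isMinOn hv₂ h₂ hv₁
  have hsplit : ⟪u₂ - u₁, v₂ - v₁⟫ =
      ‖v₂ - v₁‖ ^ 2 - ⟪u₁ - v₁, v₂ - v₁⟫ - ⟪u₂ - v₂, v₁ - v₂⟫ := by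
    rw [← real_inner_self_eq_norm_sq]
    simp only [inner_sub_left, inner_sub_right, real_inner_comm]
    ring
  have key : ‖v₂ - v₁‖ ^ 2 ≤ ‖u₂ - u₁‖ * ‖v₂ - v₁‖ :=
    (by linarith : ‖v₂ - v₁‖ ^ 2 ≤ ⟪u₂ - u₁, v₂ - v₁⟫).trans (real_inner_le_norm _ _)
  nlinarith [norm_nonneg (v₂ - v₁), norm_nonneg (u₂ - u₁)]

end Convex

section Box

variable {n : ℕ} {a b : Fin n → EReal}

theorem convex_box (a b : Fin n → EReal) : Convex ℝ (box a b) := by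
  have hbox : box a b = ⋂ i, EuclideanSpace.projₗ i ⁻¹' {t : ℝ | a i ≤ t ∧ t ≤ b i} := by
    ext; simp [box]
  rw [hbox]
  refine convex_iInter fun i => (OrdConnected.convex ⟨?_⟩).linear_preimage _
  exact fun x hx y hy t ht =>
    ⟨hx.1.trans (EReal.coe_le_coe_iff.2 ht.1), (EReal.coe_le_coe_iff.2 ht.2).trans hy.2⟩

theorem exists_ne_mem_box (hn : 0 < n) (hab : ∀ i, a i < b i) :
    ∃ v ∈ box a b, ∃ v' ∈ box a b, v ≠ v' := by
  have : ∀ i, ∃ r r' : ℝ, a i < r ∧ r < r' ∧ (r' : EReal) < b i := fun i => by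
    obtain ⟨r, har, hrb⟩ := EReal.lt_iff_exists_real_btwn.1 (hab i)
    obtain ⟨r', hrr', hr'b⟩ := EReal.lt_iff_exists_real_btwn.1 hrb
    exact ⟨r, r', har, EReal.coe_lt_coe_iff.1 hrr', hr'b⟩
  choose r r' har hrr' hr'b using this
  refine ⟨WithLp.toLp 2 r, fun i => ⟨(har i).le, ?_⟩, WithLp.toLp 2 r',
    fun i => ⟨?_, (hr'b i).le⟩, fun h => (hrr' ⟨0, hn⟩).ne (congrFun (congrArg WithLp.ofLp h) _)⟩
  · exact (EReal.coe_lt_coe_iff.2 (hrr' i)).le.trans (hr'b i).le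
  · exact (har i).le.trans (EReal.coe_lt_coe_iff.2 (hrr' i)).le

theorem update_mem_box {x : EuclideanSpace ℝ (Fin n)} (hx : x ∈ box a b) {i : Fin n} {γ : ℝ}
    (haγ : a i ≤ γ) (hγb : γ ≤ b i) :
    WithLp.toLp 2 (Function.update (WithLp.ofLp x) i γ) ∈ box a b := by
  intro j
  rcases eq_or_ne j i with rfl | hj
  · simp [haγ, hγb]
  · simpa [hj] using hx j

theorem abs_sub_apply_le_of_norm_sub_le {x y : EuclideanSpace ℝ (Fin n)} {i : Fin n} {γ : ℝ}
    (h : ‖x - y‖ ≤ ‖x - WithLp.toLp 2 (Function.update (WithLp.ofLp y) i γ)‖) :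
    |x i - y i| ≤ |x i - γ| := by
  rw [← sq_le_sq₀ (norm_nonneg _) (norm_nonneg _), EuclideanSpace.real_norm_sq_eq,
    EuclideanSpace.real_norm_sq_eq, ← Finset.add_sum_erase _ _ (Finset.mem_univ i),
    ← Finset.add_sum_erase _ _ (Finset.mem_univ i)] at h
  have hrest : ∑ j ∈ Finset.univ.erase i,
      ((x - WithLp.toLp 2 (Function.update (WithLp.ofLp y) i γ)) j) ^ 2 =
      ∑ j ∈ Finset.univ.erase i, ((x - y) j) ^ 2 :=
    Finset.sum_congr rfl fun j hj => by simp [Function.update_of_ne (Finset.ne_of_mem_erase hj)]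
  rw [hrest] at h
  rw [← sq_le_sq]
  simpa using le_of_add_le_add_right h

theorem apply_eq_of_isMinOn_box {x y : EuclideanSpace ℝ (Fin n)}
    (hmin : IsMinOn (‖x - ·‖) (box a b) y) (hy : y ∈ box a b) {i : Fin n} {γ : ℝ}
    (haγ : a i ≤ γ) (hγb : γ ≤ b i) (hγ : γ ∈ uIcc (x i) (y i)) : y i = γ := by
  have h := abs_sub_apply_le_of_norm_sub_le (isMinOn_iff.1 hmin _ (update_mem_box hy haγ hγb))
  rcases mem_uIcc.1 hγ with ⟨h₁, h₂⟩ | ⟨h₁, h₂⟩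
  · rw [abs_of_nonpos (by linarith), abs_of_nonpos (by linarith)] at h; linarith
  · rw [abs_of_nonneg (by linarith), abs_of_nonneg (by linarith)] at h; linarith

end Box

namespace IsMetricProjection

variable {p q : ℕ} {B : Set (EuclideanSpace ℝ (Fin p))} {C : Set (EuclideanSpace ℝ (Fin q))}
  {P : EuclideanSpace ℝ (Fin p) × EuclideanSpace ℝ (Fin q) →
    EuclideanSpace ℝ (Fin p) × EuclideanSpace ℝ (Fin q)}

theorem isMinOn_fst (hP : IsMetricProjection (B ×ˢ C) P) (z) :
    IsMinOn (‖z.1 - ·‖) B (P z).1 :=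
  isMinOn_iff.2 fun x hx => by
    have h := (hP z).2 (x, (P z).2) ⟨hx, (hP z).1.2⟩
    exact (pow_le_pow_iff_left₀ (norm_nonneg _) (norm_nonneg _) two_ne_zero).1 (by linarith)

theorem isMinOn_snd (hP : IsMetricProjection (B ×ˢ C) P) (z) :
    IsMinOn (‖z.2 - ·‖) C (P z).2 :=
  isMinOn_iff.2 fun v hv => by
    have h := (hP z).2 ((P z).1, v) ⟨(hP z).1.1, hv⟩
    exact (pow_le_pow_iff_left₀ (norm_nonneg _) (norm_nonneg _) two_ne_zero).1 (by linarith)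

theorem fst_eq (hP : IsMetricProjection (B ×ˢ C) P) {z} (hz : z.1 ∈ B) : (P z).1 = z.1 := by
  have h := isMinOn_iff.1 (hP.isMinOn_fst z) _ hz
  rw [sub_self, norm_zero, norm_le_zero_iff, sub_eq_zero] at h
  exact h.symm

theorem snd_eq (hP : IsMetricProjection (B ×ˢ C) P) {z} (hz : z.2 ∈ C) : (P z).2 = z.2 := by
  have h := isMinOn_iff.1 (hP.isMinOn_snd z) _ hz
  rw [sub_self, norm_zero, norm_le_zero_iff, sub_eq_zero] at h
  exact h.symm

variable {a b : Fin p → EReal}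

theorem fst_apply_eq_of_apply_le (hP : IsMetricProjection (box a b ×ˢ C) P) {i : Fin p}
    {α : ℝ} (hα : a i = α) (hab : a i ≤ b i) {z} (hz : z.1 i ≤ α) : (P z).1 i = α := by
  have hPz : α ≤ (P z).1 i := EReal.coe_le_coe_iff.1 (hα ▸ ((hP z).1.1 i).1)
  exact apply_eq_of_isMinOn_box (hP.isMinOn_fst z) (hP z).1.1 hα.le (hα ▸ hab)
    (mem_uIcc_of_le hz hPz)

theorem fst_apply_eq_of_le_apply (hP : IsMetricProjection (box a b ×ˢ C) P) {i : Fin p}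
    {β : ℝ} (hβ : b i = β) (hab : a i ≤ b i) {z} (hz : β ≤ z.1 i) : (P z).1 i = β := by
  have hPz : (P z).1 i ≤ β := EReal.coe_le_coe_iff.1 (hβ ▸ ((hP z).1.1 i).2)
  exact apply_eq_of_isMinOn_box (hP.isMinOn_fst z) (hP z).1.1 (hβ ▸ hab) hβ.ge
    (mem_uIcc_of_ge hPz hz)

end IsMetricProjection

section Lorentz

variable {p q : ℕ} {B : Set (EuclideanSpace ℝ (Fin p))} {C : Set (EuclideanSpace ℝ (Fin q))}
  {P : EuclideanSpace ℝ (Fin p) × EuclideanSpace ℝ (Fin q) →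
    EuclideanSpace ℝ (Fin p) × EuclideanSpace ℝ (Fin q)}

theorem lorentzIsotone_of_univ_prod (hC : Convex ℝ C)
    (hP : IsMetricProjection (univ ×ˢ C) P) : LorentzIsotone P := by
  intro z w hzw i
  have hnonexp : ‖(P w).2 - (P z).2‖ ≤ ‖w.2 - z.2‖ :=
    hC.norm_sub_le_of_isMinOn (hP z).1.2 (hP w).1.2 (hP.isMinOn_snd z) (hP.isMinOn_snd w)
  have h := hzw i
  simp only [Prod.fst_sub, Prod.snd_sub, PiLp.sub_apply] at h ⊢
  rw [hP.fst_eq (mem_univ _), hP.fst_eq (mem_univ _)]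
  exact hnonexp.trans h

theorem LorentzIsotone.eq_of_fst_apply_eq (hiso : LorentzIsotone P)
    (hP : IsMetricProjection (B ×ˢ C) P) {v v' : EuclideanSpace ℝ (Fin q)} (hv : v ∈ C)
    (hv' : v' ∈ C) (s : ℝ) (i : Fin p)
    (h : (P (WithLp.toLp 2 fun _ => s, v)).1 i =
      (P (WithLp.toLp 2 fun _ => s + ‖v' - v‖, v')).1 i) : v = v' := by
  set z : EuclideanSpace ℝ (Fin p) × EuclideanSpace ℝ (Fin q) := (WithLp.toLp 2 fun _ => s, v)
  set w : EuclideanSpace ℝ (Fin p) × EuclideanSpace ℝ (Fin q) :=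
    (WithLp.toLp 2 fun _ => s + ‖v' - v‖, v')
  have hle := hiso z w (fun j => by simp [z, w]) i
  rw [Prod.snd_sub, hP.snd_eq (z := w) hv', hP.snd_eq (z := z) hv, Prod.fst_sub,
    PiLp.sub_apply, h, sub_self, norm_le_zero_iff, sub_eq_zero] at hle
  exact hle.symm

theorem box_eq_univ_of_lorentzIsotone {a b : Fin p → EReal} (hab : ∀ i, a i < b i)
    {v v' : EuclideanSpace ℝ (Fin q)} (hv : v ∈ C) (hv' : v' ∈ C) (hne : v ≠ v')
    (hP : IsMetricProjection (box a b ×ˢ C) P) (hiso : LorentzIsotone P) :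
    box a b = univ := by
  have ht : 0 ≤ ‖v' - v‖ := norm_nonneg _
  refine eq_univ_of_forall fun x i => ⟨?_, ?_⟩
  · suffices a i = ⊥ by simp [this]
    by_contra ha
    have hα : a i = ((a i).toReal : EReal) := (EReal.coe_toReal (hab i).ne_top ha).symm
    refine hne (hiso.eq_of_fst_apply_eq hP hv hv' ((a i).toReal - ‖v' - v‖) i ?_)
    rw [hP.fst_apply_eq_of_apply_le hα (hab i).le (by simp [ht]),
      hP.fst_apply_eq_of_apply_le hα (hab i).le (by simp)]
  · suffices b i = ⊤ by simp [this]
    by_contra hb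
    have hβ : b i = ((b i).toReal : EReal) := (EReal.coe_toReal hb (hab i).ne_bot).symm
    refine hne (hiso.eq_of_fst_apply_eq hP hv hv' (b i).toReal i ?_)
    rw [hP.fst_apply_eq_of_le_apply hβ (hab i).le (by simp),
      hP.fst_apply_eq_of_le_apply hβ (hab i).le (by simp [ht])]

end Lorentz

theorem stmt17_general (p q : ℕ) (hq : 0 < q)
    (a b : Fin p → EReal) (c d : Fin q → EReal)
    (hab : ∀ i, a i < b i)
    (hcd : ∀ j, c j < d j)
    (B : Set (EuclideanSpace ℝ (Fin p)))
    (hB : B = {x | ∀ i, a i ≤ (x i : EReal) ∧ (x i : EReal) ≤ b i})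
    (C : Set (EuclideanSpace ℝ (Fin q)))
    (hC : C = {v | ∀ j, c j ≤ (v j : EReal) ∧ (v j : EReal) ≤ d j})
    (P : EuclideanSpace ℝ (Fin p) × EuclideanSpace ℝ (Fin q) →
      EuclideanSpace ℝ (Fin p) × EuclideanSpace ℝ (Fin q))
    (hP : IsMetricProjection (B ×ˢ C) P) :
    (∀ z w, w - z ∈ extendedLorentzCone p q →
      P w - P z ∈ extendedLorentzCone p q) ↔
    B = (Set.univ : Set (EuclideanSpace ℝ (Fin p))) := by
  change B = box a b at hB
  change C = box c d at hC
  subst hB hC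
  obtain ⟨v, hv, v', hv', hne⟩ := exists_ne_mem_box hq hcd
  refine ⟨box_eq_univ_of_lorentzIsotone hab hv hv' hne hP, fun hB => ?_⟩
  rw [hB] at hP
  exact lorentzIsotone_of_univ_prod (convex_box c d) hP

/-- For a box `K = B × C ⊆ ℝ^p × ℝ^q` with `B = ×_{i}[a_i, b_i]`,
`C = ×_{j}[c_j, d_j]` (endpoints possibly infinite, `a_i < b_i`,
`c_j < d_j`), the projection `P_K` is `L`-isotone for the extended Lorentz
cone `L` if and only if `B = ℝ^p`. -/
theorem stmt17 (p q : ℕ) (hp : 0 < p) (hq : 0 < q)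
    (a b : Fin p → EReal) (c d : Fin q → EReal)
    (ha : ∀ i, a i ≠ ⊤) (hb : ∀ i, b i ≠ ⊥) (hab : ∀ i, a i < b i)
    (hc : ∀ j, c j ≠ ⊤) (hd : ∀ j, d j ≠ ⊥) (hcd : ∀ j, c j < d j)
    (B : Set (EuclideanSpace ℝ (Fin p)))
    (hB : B = {x | ∀ i, a i ≤ (x i : EReal) ∧ (x i : EReal) ≤ b i})
    (C : Set (EuclideanSpace ℝ (Fin q)))
    (hC : C = {v | ∀ j, c j ≤ (v j : EReal) ∧ (v j : EReal) ≤ d j})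
    (P : EuclideanSpace ℝ (Fin p) × EuclideanSpace ℝ (Fin q) →
      EuclideanSpace ℝ (Fin p) × EuclideanSpace ℝ (Fin q))
    (hP : IsMetricProjection (B ×ˢ C) P) :
    (∀ z w, w - z ∈ extendedLorentzCone p q →
      P w - P z ∈ extendedLorentzCone p q) ↔
    B = (Set.univ : Set (EuclideanSpace ℝ (Fin p))) :=
  stmt17_general p q hq a b c d hab hcd B hB C hC P hP
end
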